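/- Let H be a complex separable Hilbert space, let M be a POV measure on a measurable space (X, 𝒜) and let P be a PV measure on a measurable space (Y, ℬ). The following conditions are equivalent: (i) ℛ(P) ⊆ ℛ(M); (ii) there exists a weak Markov kernel ν with respect to M, with values in {0,1}, such that P = ν∘M; (iii) there exists a weak Markov kernel ν with respect to M such that P = ν∘M. -/

import Mathlib

open MeasureTheory ComplexOrder
open scoped Classical

noncomputable section

variable {H : Type*} [NormedAddCommGroup H] [InnerProductSpace ℂ H] [CompleteSpace H]

/-- A (normalized) positive operator valued measure on the measurable space `X`:
`0 ≤ M A ≤ 1`, `M ∅ = 0`, `M univ = 1`, and `M` is weakly σ-additive. -/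
structure IsPOVM {X : Type*} [MeasurableSpace X] (M : Set X → (H →L[ℂ] H)) : Prop where
  pos : ∀ A : Set X, MeasurableSet A → (M A).IsPositive
  le_one : ∀ A : Set X, MeasurableSet A → ((1 : H →L[ℂ] H) - M A).IsPositive
  empty : M ∅ = 0
  univ : M Set.univ = 1
  m_iUnion : ∀ (ψ : H) (A : ℕ → Set X), (∀ n, MeasurableSet (A n)) →
    Pairwise (Function.onFun Disjoint A) →
    HasSum (fun n => (inner ℂ ψ (M (A n) ψ) : ℂ)) (inner ℂ ψ (M (⋃ n, A n) ψ))

/-- A projection valued (PV) measure: a POV measure whose values are orthogonal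
projections (self-adjointness is part of positivity). -/
def IsPVM {X : Type*} [MeasurableSpace X] (M : Set X → (H →L[ℂ] H)) : Prop :=
  IsPOVM M ∧ ∀ A : Set X, MeasurableSet A → M A * M A = M A

/-- The finite measure `μ_ψ^M (A) = ⟨ψ, M(A) ψ⟩` associated to a POV measure `M`
and a vector `ψ`. (Junk value `0` if `M` is not a POV measure.) -/
def vecMeasure {X : Type*} [MeasurableSpace X] (M : Set X → (H →L[ℂ] H)) (ψ : H) :
    Measure X :=
  if hM : IsPOVM M then
    Measure.ofMeasurable (fun A _ => ENNReal.ofReal (inner ℂ ψ (M A ψ) : ℂ).re)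
      (by simp [hM.empty])
      (by
        intro A hA hd
        have h := hM.m_iUnion ψ A hA hd
        have hre : HasSum (fun n => ((inner ℂ ψ (M (A n) ψ) : ℂ)).re)
            ((inner ℂ ψ (M (⋃ n, A n) ψ) : ℂ)).re := h.mapL Complex.reCLM
        have hnn : ∀ n, 0 ≤ ((inner ℂ ψ (M (A n) ψ) : ℂ)).re := by
          intro n
          have h2 := (hM.pos (A n) (hA n)).2 ψ
          rw [ContinuousLinearMap.reApplyInnerSelf] at h2
          simpa [inner_re_symm] using h2
        try dsimp only
        rw [← hre.tsum_eq]
        exact ENNReal.ofReal_tsum_of_nonneg hnn hre.summable)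
  else 0

/-- `ν : X × ℬ → ℝ` is a weak Markov kernel with respect to the POV measure `M`. -/
def IsWeakMarkovKernel {X Y : Type*} [MeasurableSpace X] [MeasurableSpace Y]
    (M : Set X → (H →L[ℂ] H)) (ν : X → Set Y → ℝ) : Prop :=
  (∀ B : Set Y, MeasurableSet B → Measurable fun x => ν x B) ∧
  ∀ ψ : H,
    (∀ B : Set Y, MeasurableSet B →
      ∀ᵐ x ∂(vecMeasure M ψ), 0 ≤ ν x B ∧ ν x B ≤ 1) ∧
    (∀ᵐ x ∂(vecMeasure M ψ), ν x Set.univ = 1) ∧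
    (∀ᵐ x ∂(vecMeasure M ψ), ν x ∅ = 0) ∧
    (∀ B : ℕ → Set Y, (∀ n, MeasurableSet (B n)) → Pairwise (Function.onFun Disjoint B) →
      ∀ᵐ x ∂(vecMeasure M ψ), HasSum (fun n => ν x (B n)) (ν x (⋃ n, B n)))

/-- `F = ν ∘ M` : the POV measure `F` is the smearing of `M` with respect to `ν`. -/
def IsSmearing {X Y : Type*} [MeasurableSpace X] [MeasurableSpace Y]
    (M : Set X → (H →L[ℂ] H)) (ν : X → Set Y → ℝ) (F : Set Y → (H →L[ℂ] H)) : Prop :=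
  ∀ B : Set Y, MeasurableSet B → ∀ ψ : H,
    (inner ℂ ψ (F B ψ) : ℂ) = ((∫ x, ν x B ∂(vecMeasure M ψ) : ℝ) : ℂ)

/-- A weak Markov kernel has values in `{0,1}`. -/
def HasZeroOneValues {X Y : Type*} [MeasurableSpace X] [MeasurableSpace Y]
    (M : Set X → (H →L[ℂ] H)) (ν : X → Set Y → ℝ) : Prop :=
  ∀ B : Set Y, MeasurableSet B → ∀ ψ : H,
    ∀ᵐ x ∂(vecMeasure M ψ), ν x B = 0 ∨ ν x B = 1

end

/-!
(i) ⇒ (ii): choose `A B` with `M (A B) = P B` and take `ν x B = 1_{A B}(x)`. When `M A` is a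
projection, `M A * M C = M (A ∩ C)` for every `C`; hence `M (A B ∩ A B') = P (B ∩ B')` and
`M (A B)ᶜ = P Bᶜ`. For disjoint `B n` the sets `A (B n)` therefore meet in `μ_ψ^M`-null sets
and their union is `μ_ψ^M`-a.e. `A (⋃ n, B n)`, which is the a.e. σ-additivity of `ν`.

(iii) ⇒ (i): put `A = {x | ν x B = 1}`. For `ψ` fixed by `P B`, `∫ ν(·, B) dμ_ψ^M = ‖ψ‖²` forces
`ν(·, B) = 1` a.e., hence `M Aᶜ ψ = 0`; for `ψ` killed by `P B`, `∫ ν(·, B) dμ_ψ^M = 0` forces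
`M A ψ = 0`. So `M A` agrees with the projection `P B` on its range and on its kernel.
-/

variable {H : Type*} [NormedAddCommGroup H] [InnerProductSpace ℂ H]

theorem ContinuousLinearMap.ext_inner_self_apply {E : Type*} [NormedAddCommGroup E]
    [InnerProductSpace ℂ E] {S T : E →L[ℂ] E}
    (h : ∀ x : E, inner ℂ x (S x) = inner ℂ x (T x)) : S = T := by
  refine ContinuousLinearMap.coe_injective ((ext_inner_map _ _).mp fun x => ?_)
  rw [← inner_conj_symm, coe_coe, h x, inner_conj_symm, coe_coe]

theorem IsIdempotentElem.eq_of_fixes_range_of_kills_ker {R E : Type*} [Semiring R]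
    [AddCommGroup E] [Module R E] [TopologicalSpace E] {Q T : E →L[R] E}
    (hQ : IsIdempotentElem Q) (hrange : ∀ x, Q x = x → T x = x)
    (hker : ∀ x, Q x = 0 → T x = 0) : T = Q := by
  ext x
  have hQQ : Q (Q x) = Q x := congr($hQ x)
  have hsplit : T x = T (Q x) + T (x - Q x) := by rw [← map_add, add_sub_cancel]
  rw [hsplit, hrange _ hQQ, hker _ (by rw [map_sub, hQQ, sub_self]), add_zero]

theorem hasSum_indicator_iUnion_apply {α ι β : Type*} [AddCommMonoid β] [TopologicalSpace β]
    {s : ι → Set α} (f : α → β) {x : α} (hx : ∀ i j, x ∈ s i → x ∈ s j → i = j) :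
    HasSum (fun i => (s i).indicator f x) ((⋃ i, s i).indicator f x) := by
  by_cases hmem : x ∈ ⋃ i, s i
  · obtain ⟨i, hi⟩ := Set.mem_iUnion.mp hmem
    rw [Set.indicator_of_mem hmem, ← Set.indicator_of_mem hi f]
    exact hasSum_single i fun j hji =>
      Set.indicator_of_notMem (fun hj => hji (hx j i hj hi)) f
  · rw [Set.indicator_of_notMem hmem]
    simp only [Set.mem_iUnion, not_exists] at hmem
    simp [Set.indicator_of_notMem (hmem _)]

theorem Pairwise.ae_eq_of_mem_of_mem {α ι : Type*} [MeasurableSpace α] [Countable ι]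
    {μ : Measure α} {s : ι → Set α} (hs : Pairwise (Function.onFun (AEDisjoint μ) s)) :
    ∀ᵐ x ∂μ, ∀ i j, x ∈ s i → x ∈ s j → i = j := by
  refine ae_all_iff.mpr fun i => ae_all_iff.mpr fun j => ?_
  by_cases hij : i = j
  · exact ae_of_all μ fun _ _ _ => hij
  · filter_upwards [measure_eq_zero_iff_ae_notMem.mp (hs hij)] with x hx hi hj
    exact absurd ⟨hi, hj⟩ hx

namespace IsPOVM

variable {X Y : Type*} [MeasurableSpace X] [MeasurableSpace Y] {M : Set X → (H →L[ℂ] H)}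
  {P : Set Y → (H →L[ℂ] H)}

theorem vecMeasure_apply (hM : IsPOVM M) (ψ : H) {A : Set X} (hA : MeasurableSet A) :
    vecMeasure M ψ A = ENNReal.ofReal (inner ℂ ψ (M A ψ)).re := by
  rw [vecMeasure, dif_pos hM, Measure.ofMeasurable_apply _ hA]

instance (ψ : H) : IsFiniteMeasure (vecMeasure M ψ) := by
  by_cases hM : IsPOVM M
  · exact ⟨by simp [hM.vecMeasure_apply ψ MeasurableSet.univ]⟩
  · rw [vecMeasure, dif_neg hM]
    infer_instance

theorem inner_apply_eq_measureReal (hM : IsPOVM M) (ψ : H) {A : Set X}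
    (hA : MeasurableSet A) : inner ℂ ψ (M A ψ) = ((vecMeasure M ψ).real A : ℂ) := by
  have hpos := hM.pos A hA
  rw [measureReal_def, hM.vecMeasure_apply ψ hA,
    ENNReal.toReal_ofReal (by simpa using hpos.re_inner_nonneg_right ψ)]
  exact (hpos.isSymmetric.coe_re_inner_self_apply ψ).symm

theorem apply_union (hM : IsPOVM M) {A B : Set X} (hA : MeasurableSet A)
    (hB : MeasurableSet B) (hAB : Disjoint A B) : M (A ∪ B) = M A + M B := by
  refine ContinuousLinearMap.ext_inner_self_apply fun ψ => ?_
  rw [add_apply, inner_add_right, hM.inner_apply_eq_measureReal ψ hA,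
    hM.inner_apply_eq_measureReal ψ hB, hM.inner_apply_eq_measureReal ψ (hA.union hB),
    measureReal_union hAB hB, Complex.ofReal_add]

theorem apply_compl (hM : IsPOVM M) {A : Set X} (hA : MeasurableSet A) : M Aᶜ = 1 - M A := by
  rw [eq_sub_iff_add_eq', ← hM.apply_union hA hA.compl disjoint_compl_right,
    Set.union_compl_self, hM.univ]

theorem mono (hM : IsPOVM M) {A B : Set X} (hA : MeasurableSet A) (hB : MeasurableSet B)
    (hAB : A ⊆ B) : M A ≤ M B := by
  rw [ContinuousLinearMap.le_def, ← Set.union_sdiff_cancel hAB,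
    hM.apply_union hA (hB.diff hA) Set.disjoint_sdiff_right, add_sub_cancel_left]
  exact hM.pos _ (hB.diff hA)

theorem vecMeasure_eq_of_eq (hM : IsPOVM M) (hP : IsPOVM P) (ψ : H) {A : Set X} {B : Set Y}
    (hA : MeasurableSet A) (hB : MeasurableSet B) (h : M A = P B) :
    vecMeasure M ψ A = vecMeasure P ψ B := by
  rw [hM.vecMeasure_apply ψ hA, hP.vecMeasure_apply ψ hB, h]

theorem isSmearing_indicator {A : Set Y → Set X} (hM : IsPOVM M)
    (hA : ∀ B, MeasurableSet B → MeasurableSet (A B))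
    (hMA : ∀ B, MeasurableSet B → M (A B) = P B) :
    IsSmearing M (fun x B => (A B).indicator (1 : X → ℝ) x) P := fun B hB ψ => by
  rw [integral_indicator_one (hA B hB), ← hM.inner_apply_eq_measureReal ψ (hA B hB), hMA B hB]

end IsPOVM

section Kernel

variable {X Y : Type*} [MeasurableSpace X] [MeasurableSpace Y] {M : Set X → (H →L[ℂ] H)}
  {P : Set Y → (H →L[ℂ] H)} {ν : X → Set Y → ℝ} {B : Set Y}

theorem IsWeakMarkovKernel.integrable (hν : IsWeakMarkovKernel M ν) (hB : MeasurableSet B)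
    (ψ : H) : Integrable (fun x => ν x B) (vecMeasure M ψ) := by
  refine (integrable_const 1).mono' (hν.1 B hB).aestronglyMeasurable ?_
  filter_upwards [(hν.2 ψ).1 B hB] with x hx
  rw [Real.norm_eq_abs, abs_of_nonneg hx.1]
  exact hx.2

theorem IsSmearing.integral_eq (hP : IsPOVM P) (h : IsSmearing M ν P) (hB : MeasurableSet B)
    (ψ : H) : ∫ x, ν x B ∂(vecMeasure M ψ) = (vecMeasure P ψ).real B := by
  exact_mod_cast (h B hB ψ).symm.trans (hP.inner_apply_eq_measureReal ψ hB)

end Kernel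

variable [CompleteSpace H]

theorem ContinuousLinearMap.IsPositive.inner_self_apply_eq_zero_iff {T : H →L[ℂ] H}
    (hT : T.IsPositive) {x : H} : inner ℂ x (T x) = 0 ↔ T x = 0 := by
  refine ⟨fun h => ?_, fun h => by rw [h, inner_zero_right]⟩
  obtain ⟨S, rfl⟩ := CStarAlgebra.nonneg_iff_eq_star_mul_self.mp (T.nonneg_iff_isPositive.mpr hT)
  have hSx : S x = 0 := by
    rwa [mul_apply_eq_comp, star_eq_adjoint, adjoint_inner_right, inner_self_eq_zero] at h
  rw [mul_apply_eq_comp, hSx, map_zero]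

theorem IsPVM.isStarProjection {Y : Type*} [MeasurableSpace Y] {P : Set Y → (H →L[ℂ] H)}
    (hP : IsPVM P) {B : Set Y} (hB : MeasurableSet B) : IsStarProjection (P B) :=
  ⟨hP.2 B hB, (hP.1.pos B hB).isSelfAdjoint⟩

namespace IsPOVM

variable {X Y : Type*} [MeasurableSpace X] [MeasurableSpace Y] {M : Set X → (H →L[ℂ] H)}
  {P : Set Y → (H →L[ℂ] H)}

theorem vecMeasure_eq_zero_iff (hM : IsPOVM M) (ψ : H) {A : Set X} (hA : MeasurableSet A) :
    vecMeasure M ψ A = 0 ↔ M A ψ = 0 := by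
  rw [← measureReal_eq_zero_iff, ← Complex.ofReal_eq_zero, ← hM.inner_apply_eq_measureReal ψ hA,
    (hM.pos A hA).inner_self_apply_eq_zero_iff]

/-- Split `C` along `A`: the projection `M A` fixes `M (C ∩ A) ≤ M A` and kills
`M (C \ A) ≤ M Aᶜ = 1 - M A`. -/
theorem mul_apply_eq_apply_inter (hM : IsPOVM M) {A C : Set X} (hA : MeasurableSet A)
    (hC : MeasurableSet C) (hproj : IsStarProjection (M A)) : M A * M C = M (A ∩ C) := by
  have hCA : MeasurableSet (C ∩ A) := hC.inter hA
  have hfix : M A * M (C ∩ A) = M (C ∩ A) :=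
    (hproj.mul_right_and_mul_left_of_nonneg_of_le ((M _).nonneg_iff_isPositive.mpr (hM.pos _ hCA))
      (hM.mono hCA hA Set.inter_subset_right)).2
  have hcompl : (1 - M A) * M (C \ A) = M (C \ A) := by
    refine (hproj.one_sub.mul_right_and_mul_left_of_nonneg_of_le
      ((M _).nonneg_iff_isPositive.mpr (hM.pos _ (hC.diff hA))) ?_).2
    rw [← hM.apply_compl hA]
    exact hM.mono (hC.diff hA) hA.compl (Set.sdiff_subset_compl C A)
  calc M A * M C = M A * M (C ∩ A) + M A * ((1 - M A) * M (C \ A)) := by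
        rw [hcompl, ← mul_add, ← hM.apply_union hCA (hC.diff hA) Set.disjoint_sdiff_inter.symm,
          Set.inter_union_sdiff]
    _ = M (A ∩ C) := by
        rw [hfix, ← mul_assoc, hproj.mul_one_sub_self, zero_mul, add_zero, Set.inter_comm]

theorem apply_inter_eq_of_eq (hM : IsPOVM M) (hP : IsPVM P) {A₁ A₂ : Set X} {B₁ B₂ : Set Y}
    (hA₁ : MeasurableSet A₁) (hA₂ : MeasurableSet A₂) (hB₁ : MeasurableSet B₁)
    (hB₂ : MeasurableSet B₂) (h₁ : M A₁ = P B₁) (h₂ : M A₂ = P B₂) :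
    M (A₁ ∩ A₂) = P (B₁ ∩ B₂) := by
  rw [← hM.mul_apply_eq_apply_inter hA₁ hA₂ (h₁ ▸ hP.isStarProjection hB₁), h₁, h₂,
    hP.1.mul_apply_eq_apply_inter hB₁ hB₂ (hP.isStarProjection hB₁)]

theorem ae_hasSum_indicator_of_eq (hM : IsPOVM M) (hP : IsPVM P) {B : ℕ → Set Y}
    (hB : ∀ n, MeasurableSet (B n)) (hBd : Pairwise (Function.onFun Disjoint B))
    {A : ℕ → Set X} {A' : Set X} (hA : ∀ n, MeasurableSet (A n)) (hA' : MeasurableSet A')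
    (hMA : ∀ n, M (A n) = P (B n)) (hMA' : M A' = P (⋃ n, B n)) (ψ : H) :
    ∀ᵐ x ∂(vecMeasure M ψ), HasSum (fun n => (A n).indicator (1 : X → ℝ) x) (A'.indicator 1 x) := by
  set μ := vecMeasure M ψ
  have hBU : MeasurableSet (⋃ n, B n) := .iUnion hB
  have hnull {C : Set X} (hC : MeasurableSet C) (h : M C = 0) : μ C = 0 :=
    (hM.vecMeasure_eq_zero_iff ψ hC).mpr (by rw [h, zero_apply])
  have hdisj : Pairwise (Function.onFun (AEDisjoint μ) A) := fun n m hnm =>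
    hnull ((hA n).inter (hA m)) (by
      rw [hM.apply_inter_eq_of_eq hP (hA n) (hA m) (hB n) (hB m) (hMA n) (hMA m),
        (hBd hnm).inter_eq, hP.1.empty])
  have hMA'c : M A'ᶜ = P (⋃ n, B n)ᶜ := by rw [hM.apply_compl hA', hP.1.apply_compl hBU, hMA']
  have hsub : ∀ n, μ (A n \ A') = 0 := fun n =>
    hnull ((hA n).diff hA') (by
      rw [Set.sdiff_eq, hM.apply_inter_eq_of_eq hP (hA n) hA'.compl (hB n) hBU.compl (hMA n) hMA'c,
        ← Set.sdiff_eq, Set.sdiff_eq_empty.mpr (Set.subset_iUnion B n), hP.1.empty])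
  have hmeas : μ A' = μ (⋃ n, A n) := by
    rw [measure_iUnion₀ hdisj fun n => (hA n).nullMeasurableSet,
      hM.vecMeasure_eq_of_eq hP.1 ψ hA' hBU hMA', measure_iUnion hBd hB]
    exact tsum_congr fun n => (hM.vecMeasure_eq_of_eq hP.1 ψ (hA n) (hB n) (hMA n)).symm
  have hU : (⋃ n, A n) =ᵐ[μ] A' :=
    ae_eq_of_ae_subset_of_measure_ge
      (ae_le_set.mpr (by rw [Set.iUnion_sdiff]; exact measure_iUnion_null hsub)) hmeas.le
      (MeasurableSet.iUnion hA).nullMeasurableSet (measure_ne_top μ A')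
  filter_upwards [hdisj.ae_eq_of_mem_of_mem, indicator_ae_eq_of_ae_eq_set (f := (1 : X → ℝ)) hU] with x hx hxU
  rw [← hxU]
  exact hasSum_indicator_iUnion_apply 1 hx

theorem isWeakMarkovKernel_indicator {A : Set Y → Set X} (hM : IsPOVM M) (hP : IsPVM P)
    (hA : ∀ B, MeasurableSet B → MeasurableSet (A B)) (hMA : ∀ B, MeasurableSet B → M (A B) = P B) :
    IsWeakMarkovKernel M fun x B => (A B).indicator (1 : X → ℝ) x := by
  refine ⟨fun B hB => measurable_const.indicator (hA B hB), fun ψ => ⟨?_, ?_, ?_, ?_⟩⟩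
  · exact fun B _ => ae_of_all _ fun x =>
      ⟨Set.indicator_nonneg (fun _ _ => zero_le_one) x,
        Set.indicator_le_self' (fun _ _ => zero_le_one) x⟩
  · have hnull : vecMeasure M ψ (A .univ)ᶜ = 0 := by
      rw [hM.vecMeasure_eq_zero_iff ψ (hA _ .univ).compl, hM.apply_compl (hA _ .univ),
        hMA _ .univ, hP.1.univ, sub_self, zero_apply]
    filter_upwards [mem_ae_iff.mpr hnull] with x hx
    exact Set.indicator_of_mem hx 1
  · have hnull : vecMeasure M ψ (A ∅) = 0 := by
      rw [hM.vecMeasure_eq_zero_iff ψ (hA _ .empty), hMA _ .empty, hP.1.empty, zero_apply]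
    filter_upwards [measure_eq_zero_iff_ae_notMem.mp hnull] with x hx
    exact Set.indicator_of_notMem hx 1
  · exact fun B hB hBd => hM.ae_hasSum_indicator_of_eq hP hB hBd (fun n => hA _ (hB n))
      (hA _ (.iUnion hB)) (fun n => hMA _ (hB n)) (hMA _ (.iUnion hB)) ψ

theorem exists_isSmearing_of_range_subset (hM : IsPOVM M) (hP : IsPVM P)
    (h : ∀ B, MeasurableSet B → ∃ A, MeasurableSet A ∧ P B = M A) :
    ∃ ν : X → Set Y → ℝ, IsWeakMarkovKernel M ν ∧ HasZeroOneValues M ν ∧ IsSmearing M ν P := by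
  choose! A hA hMA using h
  refine ⟨fun x B => (A B).indicator 1 x, hM.isWeakMarkovKernel_indicator hP hA
    (fun B hB => (hMA B hB).symm), fun B _ ψ => ae_of_all _ fun x => ?_,
    hM.isSmearing_indicator hA fun B hB => (hMA B hB).symm⟩
  by_cases hx : x ∈ A B <;> simp [hx]

end IsPOVM

section Kernel

variable {X Y : Type*} [MeasurableSpace X] [MeasurableSpace Y] {M : Set X → (H →L[ℂ] H)}
  {P : Set Y → (H →L[ℂ] H)} {ν : X → Set Y → ℝ} {B : Set Y}

theorem IsSmearing.apply_setOf_eq_one_of_apply_eq_self (hM : IsPOVM M)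
    (hP : IsPOVM P) (hν : IsWeakMarkovKernel M ν) (h : IsSmearing M ν P) (hB : MeasurableSet B)
    {ψ : H} (hψ : P B ψ = ψ) : M {x | ν x B = 1} ψ = ψ := by
  set μ := vecMeasure M ψ
  have hA : MeasurableSet {x | ν x B = 1} := hν.1 B hB (measurableSet_singleton 1)
  have hfull : (vecMeasure P ψ).real B = μ.real .univ := by
    rw [← Complex.ofReal_inj, ← hP.inner_apply_eq_measureReal ψ hB, hψ,
      ← hM.inner_apply_eq_measureReal ψ .univ, hM.univ, one_apply_eq_self]
  have hint : ∫ x, (1 - ν x B) ∂μ = 0 := by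
    rw [integral_sub (integrable_const 1) (hν.integrable hB ψ), h.integral_eq hP hB ψ,
      integral_const, smul_eq_mul, mul_one, hfull, sub_self]
  have hae : (fun x => 1 - ν x B) =ᵐ[μ] 0 :=
    (integral_eq_zero_iff_of_nonneg_ae
      (by filter_upwards [(hν.2 ψ).1 B hB] with x hx using sub_nonneg.mpr hx.2)
      ((integrable_const 1).sub (hν.integrable hB ψ))).mp hint
  have hcompl : M {x | ν x B = 1}ᶜ ψ = 0 :=
    (hM.vecMeasure_eq_zero_iff ψ hA.compl).mp
      (measure_mono_null (fun x hx h0 => hx (sub_eq_zero.mp h0).symm) (ae_iff.mp hae))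
  rwa [hM.apply_compl hA, sub_apply, one_apply_eq_self, sub_eq_zero, eq_comm] at hcompl

theorem IsSmearing.apply_setOf_eq_one_of_apply_eq_zero (hM : IsPOVM M)
    (hP : IsPOVM P) (hν : IsWeakMarkovKernel M ν) (h : IsSmearing M ν P) (hB : MeasurableSet B)
    {ψ : H} (hψ : P B ψ = 0) : M {x | ν x B = 1} ψ = 0 := by
  have hint : ∫ x, ν x B ∂(vecMeasure M ψ) = 0 := by
    rw [h.integral_eq hP hB ψ, ← Complex.ofReal_eq_zero, ← hP.inner_apply_eq_measureReal ψ hB, hψ,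
      inner_zero_right]
  have hae : (fun x => ν x B) =ᵐ[vecMeasure M ψ] 0 :=
    (integral_eq_zero_iff_of_nonneg_ae
      (by filter_upwards [(hν.2 ψ).1 B hB] with x hx using hx.1) (hν.integrable hB ψ)).mp hint
  have hA : MeasurableSet {x | ν x B = 1} := hν.1 B hB (measurableSet_singleton 1)
  refine (hM.vecMeasure_eq_zero_iff ψ hA).mp (measure_mono_null ?_ (ae_iff.mp hae))
  exact fun x (hx : ν x B = 1) h0 => one_ne_zero (hx.symm.trans h0)

theorem IsSmearing.exists_apply_eq (hM : IsPOVM M) (hP : IsPVM P)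
    (hν : IsWeakMarkovKernel M ν) (h : IsSmearing M ν P) (hB : MeasurableSet B) :
    ∃ A, MeasurableSet A ∧ P B = M A :=
  ⟨{x | ν x B = 1}, hν.1 B hB (measurableSet_singleton 1),
    (IsIdempotentElem.eq_of_fixes_range_of_kills_ker (hP.2 B hB)
      (fun _ => h.apply_setOf_eq_one_of_apply_eq_self hM hP.1 hν hB)
      (fun _ => h.apply_setOf_eq_one_of_apply_eq_zero hM hP.1 hν hB)).symm⟩

end Kernel

theorem pv_range_subset_tfae_general
    {X Y : Type*} [MeasurableSpace X] [MeasurableSpace Y]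
    (M : Set X → (H →L[ℂ] H)) (hM : IsPOVM M)
    (P : Set Y → (H →L[ℂ] H)) (hP : IsPVM P) :
    [ (∀ B : Set Y, MeasurableSet B → ∃ A : Set X, MeasurableSet A ∧ P B = M A),
      (∃ ν : X → Set Y → ℝ,
        IsWeakMarkovKernel M ν ∧ HasZeroOneValues M ν ∧ IsSmearing M ν P),
      (∃ ν : X → Set Y → ℝ, IsWeakMarkovKernel M ν ∧ IsSmearing M ν P) ].TFAE := by
  tfae_have 1 → 2 := hM.exists_isSmearing_of_range_subset hP
  tfae_have 2 → 3 := fun ⟨ν, hν, _, hsm⟩ => ⟨ν, hν, hsm⟩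
  tfae_have 3 → 1 := fun ⟨_, hν, hsm⟩ _ hB => hsm.exists_apply_eq hM hP hν hB
  tfae_finish

/-- For a POV measure `M` and a PV measure `P` the following are
equivalent: (i) `ℛ(P) ⊆ ℛ(M)`; (ii) `P = ν ∘ M` for a weak Markov kernel `ν`
with values in `{0,1}`; (iii) `P = ν ∘ M` for a weak Markov kernel `ν`. -/
theorem pv_range_subset_tfae
    [TopologicalSpace.SeparableSpace H]
    {X Y : Type*} [MeasurableSpace X] [MeasurableSpace Y]
    (M : Set X → (H →L[ℂ] H)) (hM : IsPOVM M)
    (P : Set Y → (H →L[ℂ] H)) (hP : IsPVM P) :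
    [ (∀ B : Set Y, MeasurableSet B → ∃ A : Set X, MeasurableSet A ∧ P B = M A),
      (∃ ν : X → Set Y → ℝ,
        IsWeakMarkovKernel M ν ∧ HasZeroOneValues M ν ∧ IsSmearing M ν P),
      (∃ ν : X → Set Y → ℝ, IsWeakMarkovKernel M ν ∧ IsSmearing M ν P) ].TFAE :=
  pv_range_subset_tfae_general M hM P hP
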